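/- (One-step trace growth bound) Let Ψ and M be n×n real symmetric PSD matrices with M ≼ I and 0 < ε ≤ 1/2. Then trace(exp(Ψ + ε·M)) ≤ trace(exp(Ψ)) · exp(ε(1+2ε) · (exp(Ψ)/trace(exp(Ψ))) ⬝ M). -/

import Mathlib

open Matrix NormedSpace
open scoped Nat

section AuxLemmas

attribute [local instance] Matrix.linftyOpNormedRing Matrix.linftyOpNormedAlgebra

variable {n : ℕ}


noncomputable def traceMulCLM (X : Matrix (Fin n) (Fin n) ℝ) :
    Matrix (Fin n) (Fin n) ℝ →L[ℝ] ℝ :=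
  LinearMap.toContinuousLinearMap
    ((Matrix.traceLinearMap (Fin n) ℝ ℝ).comp (LinearMap.mulRight ℝ X))

lemma traceMulCLM_apply (X B : Matrix (Fin n) (Fin n) ℝ) :
    traceMulCLM X B = (B * X).trace := rfl

noncomputable instance traceCLMNormedGroup :
    NormedAddCommGroup (Matrix (Fin n) (Fin n) ℝ →L[ℝ] ℝ) :=
  ContinuousLinearMap.toNormedAddCommGroup

lemma norm_pow_mul_le (A B : Matrix (Fin n) (Fin n) ℝ) (i : ℕ) :
    ‖A ^ i * B‖ ≤ ‖A‖ ^ i * ‖B‖ := by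
  induction i with
  | zero => simp
  | succ i ih =>
    calc ‖A ^ (i+1) * B‖ = ‖A * (A ^ i * B)‖ := by rw [pow_succ', mul_assoc]
    _ ≤ ‖A‖ * ‖A ^ i * B‖ := norm_mul_le _ _
    _ ≤ ‖A‖ * (‖A‖ ^ i * ‖B‖) := by
        exact mul_le_mul_of_nonneg_left ih (norm_nonneg _)
    _ = ‖A‖ ^ (i+1) * ‖B‖ := by ring

lemma norm_mul_pow_le (A B : Matrix (Fin n) (Fin n) ℝ) (j : ℕ) :
    ‖B * A ^ j‖ ≤ ‖B‖ * ‖A‖ ^ j := by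
  induction j with
  | zero => simp
  | succ j ih =>
    calc ‖B * A ^ (j+1)‖ = ‖B * A ^ j * A‖ := by rw [pow_succ, mul_assoc]
    _ ≤ ‖B * A ^ j‖ * ‖A‖ := norm_mul_le _ _
    _ ≤ ‖B‖ * ‖A‖ ^ j * ‖A‖ := mul_le_mul_of_nonneg_right ih (norm_nonneg _)
    _ = ‖B‖ * ‖A‖ ^ (j+1) := by ring

lemma summable_aux (c R : ℝ) :
    Summable (fun k : ℕ => c * ((k : ℝ) * R ^ (k - 1) * ((k)! : ℝ)⁻¹)) := by
  apply Summable.mul_left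
  apply (summable_nat_add_iff 1).1
  have : (fun k : ℕ => ((k + 1 : ℕ) : ℝ) * R ^ (k + 1 - 1) * (((k + 1)! : ℝ))⁻¹)
      = fun k : ℕ => R ^ k / (k ! : ℝ) := by
    funext k
    have hk : ((k + 1)! : ℝ) = ((k:ℝ) + 1) * (k ! : ℝ) := by
      rw [Nat.factorial_succ]; push_cast; ring
    rw [hk]
    have h1 : ((k:ℝ) + 1) ≠ 0 := by positivity
    have h2 : (k ! : ℝ) ≠ 0 := by positivity
    field_simp
    rw [Nat.add_sub_cancel]; push_cast; ring
  rw [this]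
  exact Real.summable_pow_div_factorial R

lemma hasDerivAt_affine (Ψ M : Matrix (Fin n) (Fin n) ℝ) (t : ℝ) :
    HasDerivAt (fun s : ℝ => Ψ + s • M) M t := by
  simpa using (show HasDerivAt (fun s : ℝ => Ψ + id s • M) ((1:ℝ) • M) t from
    ((hasDerivAt_id t).smul_const M).const_add Ψ)

lemma hasDerivAt_pow_affine (Ψ M : Matrix (Fin n) (Fin n) ℝ) (k : ℕ) (t : ℝ) :
    HasDerivAt (fun s : ℝ => (Ψ + s • M) ^ k)
      (∑ i ∈ Finset.range k, (Ψ + t • M) ^ i * M * (Ψ + t • M) ^ (k - 1 - i)) t := by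
  induction k with
  | zero => simpa using (show HasDerivAt (fun _ : ℝ => (1 : Matrix (Fin n) (Fin n) ℝ)) 0 t from
      hasDerivAt_const t (1 : Matrix (Fin n) (Fin n) ℝ))
  | succ k ih =>
    have h := (hasDerivAt_affine Ψ M t).mul ih
    have : ((fun s : ℝ => Ψ + s • M) * fun s : ℝ => (Ψ + s • M) ^ k)
        = fun s : ℝ => (Ψ + s • M) ^ (k + 1) := by
      funext s; rw [Pi.mul_apply, ← pow_succ']
    rw [this] at h
    refine h.congr_deriv (Eq.symm ?_)
    rw [Finset.sum_range_succ']
    simp only [Nat.add_sub_cancel, Nat.sub_zero, pow_zero, one_mul]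
    rw [add_comm]
    congr 1
    rw [Finset.mul_sum]
    refine Finset.sum_congr rfl fun i hi => ?_
    rw [Finset.mem_range] at hi
    rw [← mul_assoc, ← mul_assoc, ← pow_succ']
    congr 2
    omega

/-- derivative of each summand -/
lemma hasDerivAt_term (Ψ M X : Matrix (Fin n) (Fin n) ℝ) (k : ℕ) (y : ℝ) :
    HasDerivAt (fun s : ℝ => ((k)! : ℝ)⁻¹ * (((Ψ + s • M) ^ k) * X).trace)
      (((k)! : ℝ)⁻¹ * ∑ i ∈ Finset.range k,
        (((Ψ + y • M) ^ i * M * (Ψ + y • M) ^ (k - 1 - i)) * X).trace) y := by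
  have h := ((traceMulCLM X).hasFDerivAt.comp_hasDerivAt y
    (hasDerivAt_pow_affine Ψ M k y)).const_mul (((k)! : ℝ)⁻¹)
  refine h.congr_deriv (Eq.symm ?_)
  show _ = _ * ((∑ i ∈ Finset.range k, (Ψ + y • M) ^ i * M * (Ψ + y • M) ^ (k - 1 - i)) * X).trace
  rw [Finset.sum_mul, Matrix.trace_sum]

/-- the norm bound on the derivative terms -/
lemma deriv_term_bound (Ψ M X : Matrix (Fin n) (Fin n) ℝ) (k : ℕ) (y : ℝ) {R : ℝ}
    (hR : ‖Ψ + y • M‖ ≤ R) (hR0 : 0 ≤ R) :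
    ‖((k)! : ℝ)⁻¹ * ∑ i ∈ Finset.range k,
        (((Ψ + y • M) ^ i * M * (Ψ + y • M) ^ (k - 1 - i)) * X).trace‖
      ≤ (‖traceMulCLM (n := n) X‖ * ‖M‖) * ((k : ℝ) * R ^ (k - 1) * ((k)! : ℝ)⁻¹) := by
  set A := Ψ + y • M with hA
  have hterm : ∀ i ∈ Finset.range k,
      ‖((A ^ i * M * A ^ (k - 1 - i)) * X).trace‖
        ≤ ‖traceMulCLM (n := n) X‖ * ‖M‖ * R ^ (k - 1) := by
    intro i hi
    rw [Finset.mem_range] at hi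
    have h1 : ‖((A ^ i * M * A ^ (k - 1 - i)) * X).trace‖
        ≤ ‖traceMulCLM (n := n) X‖ * ‖A ^ i * M * A ^ (k - 1 - i)‖ := by
      rw [← traceMulCLM_apply]
      exact (traceMulCLM X).le_opNorm _
    refine h1.trans ?_
    have hAn : (0:ℝ) ≤ ‖A‖ := norm_nonneg _
    have hfin : ‖A ^ i * M * A ^ (k - 1 - i)‖ ≤ ‖M‖ * R ^ (k - 1) := by
      rw [mul_assoc]
      have h2 : ‖A ^ i * (M * A ^ (k - 1 - i))‖ ≤ ‖A‖ ^ i * (‖M‖ * ‖A‖ ^ (k - 1 - i)) :=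
        (norm_pow_mul_le A _ i).trans
          (mul_le_mul_of_nonneg_left (norm_mul_pow_le A M _) (by positivity))
      refine h2.trans ?_
      calc ‖A‖ ^ i * (‖M‖ * ‖A‖ ^ (k - 1 - i)) = ‖M‖ * (‖A‖ ^ i * ‖A‖ ^ (k - 1 - i)) := by ring
      _ = ‖M‖ * ‖A‖ ^ (k - 1) := by rw [← pow_add]; congr 2; omega
      _ ≤ ‖M‖ * R ^ (k - 1) := by
          exact mul_le_mul_of_nonneg_left (pow_le_pow_left₀ hAn hR _) (norm_nonneg _)
    calc ‖traceMulCLM (n := n) X‖ * ‖A ^ i * M * A ^ (k - 1 - i)‖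
        ≤ ‖traceMulCLM (n := n) X‖ * (‖M‖ * R ^ (k - 1)) :=
          mul_le_mul_of_nonneg_left hfin (norm_nonneg _)
    _ = ‖traceMulCLM (n := n) X‖ * ‖M‖ * R ^ (k - 1) := by ring
  calc ‖((k)! : ℝ)⁻¹ * ∑ i ∈ Finset.range k,
        (((A) ^ i * M * (A) ^ (k - 1 - i)) * X).trace‖
      ≤ ((k)! : ℝ)⁻¹ * ∑ i ∈ Finset.range k,
          ‖(((A) ^ i * M * (A) ^ (k - 1 - i)) * X).trace‖ := by
        rw [norm_mul, norm_inv, Real.norm_natCast]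
        exact mul_le_mul_of_nonneg_left (norm_sum_le _ _) (by positivity)
    _ ≤ ((k)! : ℝ)⁻¹ * (k * (‖traceMulCLM (n := n) X‖ * ‖M‖ * R ^ (k - 1))) := by
        have h := Finset.sum_le_sum hterm
        refine mul_le_mul_of_nonneg_left (h.trans ?_) (by positivity)
        rw [Finset.sum_const, Finset.card_range, nsmul_eq_mul]
    _ = (‖traceMulCLM (n := n) X‖ * ‖M‖) * ((k : ℝ) * R ^ (k - 1) * ((k)! : ℝ)⁻¹) := by ring

lemma hasSum_trace_pow_mul (A X : Matrix (Fin n) (Fin n) ℝ) :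
    HasSum (fun k : ℕ => ((k)! : ℝ)⁻¹ * ((A ^ k) * X).trace) ((exp A * X).trace) := by
  have h := exp_series_hasSum_exp' (𝕂 := ℝ) A
  have h2 := (traceMulCLM X).hasSum h
  refine h2.congr_fun fun k => ?_
  show _ = ((((k)! : ℝ)⁻¹ • A ^ k) * X).trace
  rw [Matrix.smul_mul, Matrix.trace_smul, smul_eq_mul]

/-- The derivative of `t ↦ trace (exp (Ψ + t•M) * X)`. -/
lemma hasDerivAt_trace_exp_mul (Ψ M X : Matrix (Fin n) (Fin n) ℝ) (t : ℝ) :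
    HasDerivAt (fun s : ℝ => ((exp (Ψ + s • M)) * X).trace)
      (∑' k : ℕ, ((k)! : ℝ)⁻¹ * ∑ i ∈ Finset.range k,
        (((Ψ + t • M) ^ i * M * (Ψ + t • M) ^ (k - 1 - i)) * X).trace) t := by
  set R : ℝ := ‖Ψ‖ + (|t| + 1) * ‖M‖ with hRdef
  have hR0 : 0 ≤ R := by positivity
  have hRy : ∀ y ∈ Set.Ioo (t - 1) (t + 1), ‖Ψ + y • M‖ ≤ R := by
    intro y hy
    have h1 : |y| ≤ |t| + 1 := by
      rw [abs_le]; rcases hy with ⟨h2, h3⟩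
      constructor <;> [linarith [neg_abs_le t]; linarith [le_abs_self t]]
    calc ‖Ψ + y • M‖ ≤ ‖Ψ‖ + ‖y • M‖ := norm_add_le _ _
    _ = ‖Ψ‖ + |y| * ‖M‖ := by rw [norm_smul, Real.norm_eq_abs]
    _ ≤ R := by
        rw [hRdef]
        have := mul_le_mul_of_nonneg_right h1 (norm_nonneg M)
        linarith
  have key := hasDerivAt_tsum_of_isPreconnected (y₀ := t) (y := t)
    (summable_aux (‖traceMulCLM (n := n) X‖ * ‖M‖) R)
    (isOpen_Ioo (a := t - 1) (b := t + 1)) isPreconnected_Ioo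
    (fun k y _ => hasDerivAt_term Ψ M X k y)
    (fun k y hy => deriv_term_bound Ψ M X k y (hRy y hy) hR0)
    (Set.mem_Ioo.2 ⟨by linarith, by linarith⟩)
    ((hasSum_trace_pow_mul (Ψ + t • M) X).summable)
    (Set.mem_Ioo.2 ⟨by linarith, by linarith⟩)
  have heq : (fun z : ℝ => ∑' k : ℕ, ((k)! : ℝ)⁻¹ * (((Ψ + z • M) ^ k) * X).trace)
      = fun s : ℝ => ((exp (Ψ + s • M)) * X).trace := by
    funext z
    exact (hasSum_trace_pow_mul (Ψ + z • M) X).tsum_eq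
  rwa [heq] at key

lemma summable_deriv_terms (Ψ M X : Matrix (Fin n) (Fin n) ℝ) (t : ℝ) :
    Summable (fun k : ℕ => ((k)! : ℝ)⁻¹ * ∑ i ∈ Finset.range k,
        (((Ψ + t • M) ^ i * M * (Ψ + t • M) ^ (k - 1 - i)) * X).trace) := by
  set R : ℝ := ‖Ψ + t • M‖ with hRdef
  exact Summable.of_norm_bounded (summable_aux (‖traceMulCLM (n := n) X‖ * ‖M‖) R)
    (fun k => deriv_term_bound Ψ M X k t le_rfl (norm_nonneg _))

lemma pointwise_amgm {a b : ℝ} (ha : 0 ≤ a) (hb : 0 ≤ b) (i j : ℕ) :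
    a ^ i * b ^ j + b ^ i * a ^ j ≤ a ^ (i + j) + b ^ (i + j) := by
  have key : 0 ≤ (a ^ i - b ^ i) * (a ^ j - b ^ j) := by
    rcases le_total a b with h | h
    · have h1 := sub_nonpos.2 (pow_le_pow_left₀ ha h i)
      have h2 := sub_nonpos.2 (pow_le_pow_left₀ ha h j)
      nlinarith
    · have h1 := sub_nonneg.2 (pow_le_pow_left₀ hb h i)
      have h2 := sub_nonneg.2 (pow_le_pow_left₀ hb h j)
      nlinarith
  have e1 : a ^ i * a ^ j = a ^ (i + j) := (pow_add a i j).symm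
  have e2 : b ^ i * b ^ j = b ^ (i + j) := (pow_add b i j).symm
  nlinarith [key]

lemma trace_unitary_conj {U B : Matrix (Fin n) (Fin n) ℝ} (hU : star U * U = 1) :
    (U * B * star U).trace = B.trace := by
  rw [Matrix.trace_mul_comm, ← Matrix.mul_assoc, hU, Matrix.one_mul]

lemma trace_diag_mul_diag_mul (d : Fin n → ℝ) (N : Matrix (Fin n) (Fin n) ℝ) (i j : ℕ) :
    ((Matrix.diagonal d) ^ i * N * ((Matrix.diagonal d) ^ j * N)).trace
      = ∑ p, ∑ q, d p ^ i * d q ^ j * (N p q * N q p) := by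
  have h1 : (Matrix.diagonal d) ^ i * N * ((Matrix.diagonal d) ^ j * N)
      = ((Matrix.diagonal d) ^ i * N) * ((Matrix.diagonal d) ^ j * N) := by
    rw [Matrix.mul_assoc]
  rw [h1]
  simp only [Matrix.trace, Matrix.diag_apply, Matrix.mul_apply, Matrix.diagonal_pow,
    Matrix.diagonal_apply, ite_mul, zero_mul, Finset.sum_ite_eq, Finset.mem_univ, if_true,
    Pi.pow_apply]
  refine Finset.sum_congr rfl fun p _ => Finset.sum_congr rfl fun q _ => ?_
  ring

lemma conj_mul_conj {U : Matrix (Fin n) (Fin n) ℝ} (hU : star U * U = 1)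
    (B C : Matrix (Fin n) (Fin n) ℝ) :
    (U * B * star U) * (U * C * star U) = U * (B * C) * star U := by
  have h : star U * (U * (C * star U)) = C * star U := by
    rw [← Matrix.mul_assoc, hU, Matrix.one_mul]
  simp only [Matrix.mul_assoc, h]

lemma key_trace_ineq (A M : Matrix (Fin n) (Fin n) ℝ) (hA : A.PosSemidef)
    (hM : M.IsHermitian) (k : ℕ) :
    ∑ i ∈ Finset.range k, ((A ^ i * M * A ^ (k - 1 - i)) * M).trace
      ≤ (k : ℝ) * ((A ^ (k - 1) * (M * M)).trace) := by
  set U : Matrix (Fin n) (Fin n) ℝ := (hA.isHermitian.eigenvectorUnitary : Matrix (Fin n) (Fin n) ℝ) with hUdef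
  have hU : star U * U = 1 :=
    Matrix.mem_unitaryGroup_iff'.mp hA.isHermitian.eigenvectorUnitary.2
  have hU' : U * star U = 1 :=
    Matrix.mem_unitaryGroup_iff.mp hA.isHermitian.eigenvectorUnitary.2
  set d : Fin n → ℝ := hA.isHermitian.eigenvalues with hddef
  have hd : ∀ p, 0 ≤ d p := hA.eigenvalues_nonneg
  have hspec : A = U * Matrix.diagonal d * star U := by
    have h := hA.isHermitian.spectral_theorem
    rwa [RCLike.ofReal_real_eq_id, Function.id_comp] at h
  set N : Matrix (Fin n) (Fin n) ℝ := star U * M * U with hNdef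
  have hMN : M = U * N * star U := by
    rw [hNdef, ← Matrix.mul_assoc, ← Matrix.mul_assoc, hU', Matrix.one_mul, Matrix.mul_assoc,
      hU', Matrix.mul_one]
  have hNherm : N.IsHermitian := by
    have h : N = (star U) * M * (star U)ᴴ := by
      rw [hNdef, Matrix.star_eq_conjTranspose, Matrix.conjTranspose_conjTranspose]
    rw [h]
    exact Matrix.isHermitian_mul_mul_conjTranspose _ hM
  have hNsymm : ∀ p q, N q p = N p q := by
    intro p q
    have h := hNherm.apply p q
    simpa using h
  have hApow : ∀ i : ℕ, A ^ i = U * (Matrix.diagonal d) ^ i * star U := by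
    intro i
    induction i with
    | zero => simp [pow_zero, Matrix.mul_one, hU']
    | succ i ih =>
      rw [pow_succ, ih, hspec, conj_mul_conj hU, pow_succ]
  have hterm : ∀ i j : ℕ, ((A ^ i * M * A ^ j) * M).trace
      = ∑ p, ∑ q, d p ^ i * d q ^ j * (N p q * N q p) := by
    intro i j
    have h1 : (A ^ i * M * A ^ j) * M
        = U * ((Matrix.diagonal d ^ i * N * Matrix.diagonal d ^ j) * N) * star U := by
      rw [hApow i, hApow j]
      conv_lhs => rw [hMN]
      rw [conj_mul_conj hU, conj_mul_conj hU, conj_mul_conj hU]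
    rw [h1, trace_unitary_conj hU, Matrix.mul_assoc, trace_diag_mul_diag_mul]
  -- the right-hand side in the same coordinates
  have hrhs : ((A ^ (k - 1) * (M * M)).trace)
      = ∑ p, ∑ q, d p ^ (k - 1) * (N p q * N q p) := by
    have h0 : A ^ (k - 1) * (M * M) = (A ^ (k - 1) * M * A ^ 0) * M := by
      rw [pow_zero, Matrix.mul_one, Matrix.mul_assoc]
    rw [h0, hterm (k - 1) 0]
    simp [pow_zero]
  have hc : ∀ p q, 0 ≤ N p q * N q p := by
    intro p q; rw [hNsymm]; exact mul_self_nonneg _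
  -- each summand is bounded by the trace term
  have hbound : ∀ i ∈ Finset.range k,
      ((A ^ i * M * A ^ (k - 1 - i)) * M).trace ≤ (A ^ (k - 1) * (M * M)).trace := by
    intro i hi
    rw [Finset.mem_range] at hi
    rw [hterm, hrhs]
    set c : Fin n → Fin n → ℝ := fun p q => N p q * N q p with hcdef
    have swap_gen : ∀ f g : Fin n → ℝ,
        (∑ p, ∑ q, f p * g q * c p q) = ∑ p, ∑ q, f q * g p * c p q := by
      intro f g
      rw [Finset.sum_comm]
      refine Finset.sum_congr rfl fun p _ => Finset.sum_congr rfl fun q _ => ?_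
      simp only [hcdef]
      ring
    set j := k - 1 - i with hjdef
    have hij : i + j = k - 1 := by omega
    have eX : (∑ p, ∑ q, d p ^ i * d q ^ j * c p q)
        = ∑ p, ∑ q, d q ^ i * d p ^ j * c p q :=
      swap_gen (fun p => d p ^ i) (fun q => d q ^ j)
    have e2 : (∑ p, ∑ q, d p ^ (k-1) * c p q) = ∑ p, ∑ q, d q ^ (k-1) * c p q := by
      have h := swap_gen (fun p => d p ^ (k-1)) (fun _ => (1:ℝ))
      simpa [mul_one, one_mul] using h
    have hmain : (∑ p, ∑ q, d p ^ i * d q ^ j * c p q)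
          + (∑ p, ∑ q, d q ^ i * d p ^ j * c p q)
        ≤ (∑ p, ∑ q, d p ^ (k-1) * c p q) + (∑ p, ∑ q, d q ^ (k-1) * c p q) := by
      rw [← Finset.sum_add_distrib, ← Finset.sum_add_distrib]
      refine Finset.sum_le_sum fun p _ => ?_
      rw [← Finset.sum_add_distrib, ← Finset.sum_add_distrib]
      refine Finset.sum_le_sum fun q _ => ?_
      have hp := pointwise_amgm (hd p) (hd q) i j
      rw [hij] at hp
      calc d p ^ i * d q ^ j * c p q + d q ^ i * d p ^ j * c p q
          = (d p ^ i * d q ^ j + d q ^ i * d p ^ j) * c p q := by ring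
      _ ≤ (d p ^ (k-1) + d q ^ (k-1)) * c p q := mul_le_mul_of_nonneg_right hp (hc p q)
      _ = d p ^ (k-1) * c p q + d q ^ (k-1) * c p q := by ring
    linarith
  calc ∑ i ∈ Finset.range k, ((A ^ i * M * A ^ (k - 1 - i)) * M).trace
      ≤ ∑ _i ∈ Finset.range k, (A ^ (k - 1) * (M * M)).trace := Finset.sum_le_sum hbound
  _ = (k : ℝ) * ((A ^ (k - 1) * (M * M)).trace) := by
      rw [Finset.sum_const, Finset.card_range, nsmul_eq_mul]

lemma trace_nonneg_of_posSemidef {A : Matrix (Fin n) (Fin n) ℝ} (hA : A.PosSemidef) :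
    0 ≤ A.trace := by
  exact hA.trace_nonneg

open scoped MatrixOrder in
lemma exists_sqrt_aux {B : Matrix (Fin n) (Fin n) ℝ} (hB : B.PosSemidef) :
    ∃ S : Matrix (Fin n) (Fin n) ℝ, S * S = B ∧ S.IsHermitian :=
  ⟨CFC.sqrt B, CFC.sqrt_mul_sqrt_self B hB.nonneg, (CFC.sqrt_nonneg B).posSemidef.isHermitian⟩

lemma trace_mul_nonneg {A B : Matrix (Fin n) (Fin n) ℝ}
    (hA : A.PosSemidef) (hB : B.PosSemidef) : 0 ≤ (A * B).trace := by
  obtain ⟨S, hsq, hS⟩ := exists_sqrt_aux hB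
  have h1 : (A * B).trace = (Sᴴ * A * S).trace := by
    rw [← hsq, ← Matrix.mul_assoc, Matrix.trace_mul_comm, ← Matrix.mul_assoc, hS.eq]
  rw [h1]
  exact trace_nonneg_of_posSemidef (hA.conjTranspose_mul_mul_same S)

lemma posSemidef_exp {A : Matrix (Fin n) (Fin n) ℝ} (hA : A.IsHermitian) :
    (exp A).PosSemidef := by
  have hhalf : A = (2⁻¹ : ℝ) • A + (2⁻¹ : ℝ) • A := by
    rw [← add_smul]; norm_num
  have hherm : ((2⁻¹ : ℝ) • A).IsHermitian := by
    show _ᴴ = _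
    rw [Matrix.conjTranspose_smul, hA.eq, star_trivial]
  have hcomm : Commute ((2⁻¹ : ℝ) • A) ((2⁻¹ : ℝ) • A) := Commute.refl _
  have hsplit : exp A = exp ((2⁻¹ : ℝ) • A) * exp ((2⁻¹ : ℝ) • A) := by
    conv_lhs => rw [hhalf]
    exact Matrix.exp_add_of_commute _ _ hcomm
  have hct : (exp ((2⁻¹ : ℝ) • A))ᴴ = exp ((2⁻¹ : ℝ) • A) := by
    rw [← Matrix.exp_conjTranspose, hherm.eq]
  have hps := Matrix.posSemidef_conjTranspose_mul_self (exp ((2⁻¹ : ℝ) • A))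
  rw [hct] at hps
  rwa [hsplit]

lemma posSemidef_smul {A : Matrix (Fin n) (Fin n) ℝ} (hA : A.PosSemidef) {c : ℝ} (hc : 0 ≤ c) :
    (c • A).PosSemidef := by
  have hherm : (c • A).IsHermitian := by
    show _ᴴ = _
    rw [Matrix.conjTranspose_smul, hA.1.eq, star_trivial]
  exact hA.smul hc

lemma posSemidef_sub_sq {M : Matrix (Fin n) (Fin n) ℝ} (hM : M.PosSemidef)
    (hMI : ((1 : Matrix (Fin n) (Fin n) ℝ) - M).PosSemidef) :
    (M - M * M).PosSemidef := by
  obtain ⟨S, hsq, hS⟩ := exists_sqrt_aux hM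
  have key : M - M * M = Sᴴ * ((1 : Matrix (Fin n) (Fin n) ℝ) - M) * S := by
    rw [hS.eq, Matrix.mul_sub, Matrix.sub_mul, Matrix.mul_one, hsq]
    congr 1
    rw [Matrix.mul_assoc, ← Matrix.mul_assoc S M S]
    rw [← hsq]
    noncomm_ring
  rw [key]
  exact hMI.conjTranspose_mul_mul_same S

/-- shifted series: `∑ k, k/k! tr(A^{k-1} X) = tr(exp A * X)` -/
lemma summable_shift (A X : Matrix (Fin n) (Fin n) ℝ) :
    Summable (fun k : ℕ => ((k)! : ℝ)⁻¹ * ((k : ℝ) * ((A ^ (k - 1) * X).trace))) := by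
  have hc := (hasSum_trace_pow_mul A X).summable
  have he : (fun k : ℕ => (((k+1))! : ℝ)⁻¹ * (((k+1 : ℕ) : ℝ) * ((A ^ (k+1 - 1) * X).trace)))
      = fun k : ℕ => ((k)! : ℝ)⁻¹ * ((A ^ k * X).trace) := by
    funext k
    have h1 : (((k+1))! : ℝ) = ((k:ℝ)+1) * ((k)! : ℝ) := by
      rw [Nat.factorial_succ]; push_cast; ring
    rw [Nat.add_sub_cancel, h1]
    have h2 : ((k:ℝ)+1) ≠ 0 := by positivity
    have h3 : ((k)! : ℝ) ≠ 0 := by positivity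
    field_simp
    push_cast; ring
  apply (summable_nat_add_iff 1).1
  rw [show (fun k : ℕ => ((k+1)! : ℝ)⁻¹ * (((k+1 : ℕ)) * ((A ^ (k+1 - 1) * X).trace))) = _ from he]
  exact hc

lemma tsum_shift_eq (A X : Matrix (Fin n) (Fin n) ℝ) :
    (∑' k : ℕ, ((k)! : ℝ)⁻¹ * ((k : ℝ) * ((A ^ (k - 1) * X).trace)))
      = ((exp A) * X).trace := by
  rw [Summable.tsum_eq_zero_add (summable_shift A X)]
  simp only [Nat.cast_zero, zero_mul, mul_zero, zero_add]
  have he : ∀ k : ℕ, (((k+1))! : ℝ)⁻¹ * (((k+1:ℕ) : ℝ) * ((A ^ (k+1 - 1) * X).trace))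
      = ((k)! : ℝ)⁻¹ * ((A ^ k * X).trace) := by
    intro k
    have h1 : (((k+1))! : ℝ) = ((k:ℝ)+1) * ((k)! : ℝ) := by
      rw [Nat.factorial_succ]; push_cast; ring
    rw [Nat.add_sub_cancel, h1]
    have h2 : ((k:ℝ)+1) ≠ 0 := by positivity
    have h3 : ((k)! : ℝ) ≠ 0 := by positivity
    field_simp
    push_cast; ring
  rw [tsum_congr he]
  exact (hasSum_trace_pow_mul A X).tsum_eq

/-- derivative of trace exp: `F' = g` -/
lemma hasDerivAt_F (Ψ M : Matrix (Fin n) (Fin n) ℝ) (t : ℝ) :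
    HasDerivAt (fun s : ℝ => (exp (Ψ + s • M)).trace)
      (((exp (Ψ + t • M)) * M).trace) t := by
  have h := hasDerivAt_trace_exp_mul Ψ M 1 t
  have hfun : (fun s : ℝ => ((exp (Ψ + s • M)) * 1).trace)
      = fun s : ℝ => (exp (Ψ + s • M)).trace := by
    funext s; rw [Matrix.mul_one]
  rw [hfun] at h
  convert h using 1
  set A := Ψ + t • M with hA
  have hterm : ∀ k : ℕ, ((k)! : ℝ)⁻¹ * ∑ i ∈ Finset.range k,
      ((A ^ i * M * A ^ (k - 1 - i)) * 1).trace
      = ((k)! : ℝ)⁻¹ * ((k:ℝ) * ((A ^ (k - 1) * M).trace)) := by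
    intro k
    congr 1
    have hi : ∀ i ∈ Finset.range k,
        ((A ^ i * M * A ^ (k - 1 - i)) * 1).trace = (A ^ (k-1) * M).trace := by
      intro i hik
      rw [Finset.mem_range] at hik
      rw [Matrix.mul_one, Matrix.trace_mul_comm, ← Matrix.mul_assoc, ← pow_add]
      congr 3
      omega
    rw [Finset.sum_congr rfl hi, Finset.sum_const, Finset.card_range, nsmul_eq_mul]
  rw [← tsum_shift_eq A M, tsum_congr hterm]

/-- the derivative of `g` is at most `g` for `t ≥ 0` -/
lemma deriv_g_le (Ψ M : Matrix (Fin n) (Fin n) ℝ) (hΨ : Ψ.PosSemidef) (hM : M.PosSemidef)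
    (hMI : ((1 : Matrix (Fin n) (Fin n) ℝ) - M).PosSemidef) {t : ℝ} (ht : 0 ≤ t) :
    (∑' k : ℕ, ((k)! : ℝ)⁻¹ * ∑ i ∈ Finset.range k,
        (((Ψ + t • M) ^ i * M * (Ψ + t • M) ^ (k - 1 - i)) * M).trace)
      ≤ ((exp (Ψ + t • M)) * M).trace := by
  set A := Ψ + t • M with hA
  have hApsd : A.PosSemidef := hΨ.add (posSemidef_smul hM ht)
  have hstep1 : (∑' k : ℕ, ((k)! : ℝ)⁻¹ * ∑ i ∈ Finset.range k,
        ((A ^ i * M * A ^ (k - 1 - i)) * M).trace)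
      ≤ ∑' k : ℕ, ((k)! : ℝ)⁻¹ * ((k : ℝ) * ((A ^ (k - 1) * (M * M)).trace)) := by
    refine Summable.tsum_le_tsum (fun k => ?_) (summable_deriv_terms Ψ M M t) (summable_shift A (M * M))
    have hk := key_trace_ineq A M hApsd hM.isHermitian k
    have hfac : (0:ℝ) ≤ ((k)! : ℝ)⁻¹ := by positivity
    exact mul_le_mul_of_nonneg_left hk hfac
  have hstep2 : (∑' k : ℕ, ((k)! : ℝ)⁻¹ * ((k : ℝ) * ((A ^ (k - 1) * (M * M)).trace)))
      = ((exp A) * (M * M)).trace := tsum_shift_eq A (M * M)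
  have hstep3 : ((exp A) * (M * M)).trace ≤ ((exp A) * M).trace := by
    have hpsd : (M - M * M).PosSemidef := posSemidef_sub_sq hM hMI
    have hexp : (exp A).PosSemidef := posSemidef_exp hApsd.isHermitian
    have h := trace_mul_nonneg hexp hpsd
    rw [Matrix.mul_sub, Matrix.trace_sub] at h
    linarith
  calc _ ≤ _ := hstep1
  _ = _ := hstep2
  _ ≤ _ := hstep3

end AuxLemmas

/-- One-step trace growth bound: for symmetric PSD `Ψ`, `M` with `M ≼ I` and
`0 < ε ≤ 1/2`,
`trace (exp (Ψ + ε • M)) ≤ trace (exp Ψ) * exp (ε (1+2ε) · (exp Ψ / trace (exp Ψ)) ⬝ M)`. -/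
theorem one_step_trace_growth {n : ℕ} (Ψ M : Matrix (Fin n) (Fin n) ℝ) (ε : ℝ)
    (hΨ : Ψ.PosSemidef) (hM : M.PosSemidef)
    (hMI : ((1 : Matrix (Fin n) (Fin n) ℝ) - M).PosSemidef)
    (hε0 : 0 < ε) (hε : ε ≤ 1 / 2) :
    (exp (Ψ + ε • M)).trace ≤
      (exp Ψ).trace *
        Real.exp (ε * (1 + 2 * ε) * (((exp Ψ).trace⁻¹ • exp Ψ) * M).trace) := by
  rcases Nat.eq_zero_or_pos n with hn | hn
  · subst hn
    simp [Matrix.trace_eq_zero_of_isEmpty]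
  -- notation
  set F : ℝ → ℝ := fun s => (exp (Ψ + s • M)).trace with hFdef
  set g : ℝ → ℝ := fun s => ((exp (Ψ + s • M)) * M).trace with hgdef
  have hF' : ∀ t : ℝ, HasDerivAt F (g t) t := fun t => hasDerivAt_F Ψ M t
  have hg' : ∀ t : ℝ, HasDerivAt g (∑' k : ℕ, ((k)! : ℝ)⁻¹ * ∑ i ∈ Finset.range k,
      (((Ψ + t • M) ^ i * M * (Ψ + t • M) ^ (k - 1 - i)) * M).trace) t :=
    fun t => hasDerivAt_trace_exp_mul Ψ M M t
  have hgle : ∀ t : ℝ, 0 ≤ t → (∑' k : ℕ, ((k)! : ℝ)⁻¹ * ∑ i ∈ Finset.range k,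
      (((Ψ + t • M) ^ i * M * (Ψ + t • M) ^ (k - 1 - i)) * M).trace) ≤ g t :=
    fun t ht => deriv_g_le Ψ M hΨ hM hMI ht
  -- step 1: g t ≤ exp t * g 0 on [0, ε]
  set r : ℝ → ℝ := fun s => Real.exp (-s) * g s with hrdef
  have hr' : ∀ s : ℝ, HasDerivAt r (Real.exp (-s) * ((∑' k : ℕ, ((k)! : ℝ)⁻¹ *
      ∑ i ∈ Finset.range k,
      (((Ψ + s • M) ^ i * M * (Ψ + s • M) ^ (k - 1 - i)) * M).trace) - g s)) s := by
    intro s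
    have hexp : HasDerivAt (fun u : ℝ => Real.exp (-u)) (-Real.exp (-s)) s := by
      have h : HasDerivAt (fun u : ℝ => Real.exp (-u)) (Real.exp (-s) * -1) s :=
        (Real.hasDerivAt_exp (-s)).comp s (hasDerivAt_neg s)
      simpa [mul_comm] using h
    have h := hexp.mul (hg' s)
    refine h.congr_deriv ?_
    ring
  have hranti : AntitoneOn r (Set.Icc 0 ε) := by
    refine antitoneOn_of_deriv_nonpos (convex_Icc 0 ε) ?_ ?_ ?_
    · exact fun x _ => ((hr' x).continuousAt).continuousWithinAt
    · exact fun x hx => ((hr' x).differentiableAt).differentiableWithinAt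
    · intro x hx
      rw [interior_Icc] at hx
      rw [(hr' x).deriv]
      have h1 := hgle x (le_of_lt hx.1)
      have h2 : (0:ℝ) ≤ Real.exp (-x) := (Real.exp_pos _).le
      nlinarith
  have hclaim1 : ∀ t ∈ Set.Icc (0:ℝ) ε, g t ≤ Real.exp t * g 0 := by
    intro t ht
    have h := hranti (Set.left_mem_Icc.2 hε0.le) ht ht.1
    have h2 : Real.exp (-t) * g t ≤ g 0 := by simpa [hrdef] using h
    have h3 := mul_le_mul_of_nonneg_left h2 (Real.exp_pos t).le
    rw [← mul_assoc, ← Real.exp_add] at h3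
    simpa using h3
  -- step 2: F ε ≤ F 0 + (exp ε - 1) * g 0
  set w : ℝ → ℝ := fun s => F s - Real.exp s * g 0 with hwdef
  have hw' : ∀ s : ℝ, HasDerivAt w (g s - Real.exp s * g 0) s := by
    intro s
    exact (hF' s).sub ((Real.hasDerivAt_exp s).mul_const (g 0))
  have hwanti : AntitoneOn w (Set.Icc 0 ε) := by
    refine antitoneOn_of_deriv_nonpos (convex_Icc 0 ε) ?_ ?_ ?_
    · exact fun x _ => ((hw' x).continuousAt).continuousWithinAt
    · exact fun x hx => ((hw' x).differentiableAt).differentiableWithinAt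
    · intro x hx
      rw [interior_Icc] at hx
      rw [(hw' x).deriv]
      have h1 := hclaim1 x ⟨hx.1.le, hx.2.le⟩
      linarith
  have hstep2 : F ε ≤ F 0 + (Real.exp ε - 1) * g 0 := by
    have h := hwanti (Set.left_mem_Icc.2 hε0.le) (Set.right_mem_Icc.2 hε0.le) hε0.le
    simp only [hwdef, Real.exp_zero, one_mul] at h
    linarith
  -- facts about F 0 and g 0
  have hazero : Ψ + (0:ℝ) • M = Ψ := by simp
  have hF0 : F 0 = (exp Ψ).trace := by rw [hFdef]; simp only [hazero]
  have hg0 : g 0 = ((exp Ψ) * M).trace := by rw [hgdef]; simp only [hazero]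
  have hg0nn : 0 ≤ g 0 := by
    rw [hg0]
    exact trace_mul_nonneg (posSemidef_exp hΨ.isHermitian) hM
  have hT : (n : ℝ) ≤ (exp Ψ).trace := by
    have h : HasSum (fun k : ℕ => ((k)! : ℝ)⁻¹ * (Ψ ^ k).trace) ((exp Ψ).trace) := by
      have h0 := hasSum_trace_pow_mul Ψ 1
      simpa [Matrix.mul_one] using h0
    have h2 := le_hasSum h 0 (fun k _ => by
      have := trace_nonneg_of_posSemidef (hΨ.pow k)
      positivity)
    simpa [Nat.factorial_zero, Matrix.trace_one] using h2
  have hTpos : 0 < (exp Ψ).trace := by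
    have : (0:ℝ) < n := by exact_mod_cast hn
    linarith
  -- exp ε - 1 ≤ ε (1 + 2 ε)
  have hexpb : Real.exp ε - 1 ≤ ε * (1 + 2 * ε) := by
    have h := Real.exp_bound' hε0.le (by linarith) (n := 2) (by norm_num)
    have h2 : (∑ m ∈ Finset.range 2, ε ^ m / m.factorial) = 1 + ε := by
      simp [Finset.sum_range_succ]
    rw [h2] at h
    have h3 : ε ^ 2 * (2 + 1) / ((2:ℕ).factorial * 2) = (3/4) * ε^2 := by
      norm_num [Nat.factorial]; ring
    nlinarith [sq_nonneg ε]
  -- combine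
  have hmain : F ε ≤ (exp Ψ).trace + ε * (1 + 2 * ε) * g 0 := by
    have h1 : (Real.exp ε - 1) * g 0 ≤ ε * (1 + 2 * ε) * g 0 :=
      mul_le_mul_of_nonneg_right hexpb hg0nn
    rw [hF0] at hstep2
    linarith
  -- right-hand side
  set T := (exp Ψ).trace with hTdef
  have hrhs : (((exp Ψ).trace⁻¹ • exp Ψ) * M).trace = T⁻¹ * g 0 := by
    rw [Matrix.smul_mul, Matrix.trace_smul, smul_eq_mul, hg0]
  rw [hrhs]
  have hxle : T + ε * (1 + 2 * ε) * g 0 ≤ T * Real.exp (ε * (1 + 2 * ε) * (T⁻¹ * g 0)) := by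
    have h1 : ε * (1 + 2 * ε) * (T⁻¹ * g 0) + 1 ≤ Real.exp (ε * (1 + 2 * ε) * (T⁻¹ * g 0)) :=
      Real.add_one_le_exp _
    have h2 := mul_le_mul_of_nonneg_left h1 hTpos.le
    have h3 : T * (ε * (1 + 2 * ε) * (T⁻¹ * g 0) + 1) = T + ε * (1 + 2 * ε) * g 0 := by
      field_simp
      ring
    linarith [h2, h3.symm.le]
  calc (exp (Ψ + ε • M)).trace = F ε := rfl
  _ ≤ T + ε * (1 + 2 * ε) * g 0 := hmain
  _ ≤ T * Real.exp (ε * (1 + 2 * ε) * (T⁻¹ * g 0)) := hxle
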